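/- arXiv:1210.1259 — 4 statements merged into one kernel-verified Lean document; each statement's English description precedes it below -/
import Mathlib

section
/- Let S₀ be a set of modal propositional formulas closed under the rule 'if φ ∈ S₀ then K(φ) ∈ S₀', containing all instances of K(φ→ψ)→K(φ)→K(ψ), and containing K(φ) for every propositional tautology φ (where here semantic consequence S₀ ⊨ φ means φ is true in every model of S₀, models interpreting K arbitrarily as a function on formulas). Then: whenever S₀ ⊨ φ, also S₀ ⊨ K(φ). -/
/-- Formulas of propositional modal logic with a unary operator K. -/
inductive Formula : Type
  | atom : ℕ → Formula
  | imp : Formula → Formula → Formula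
  | neg : Formula → Formula
  | K : Formula → Formula

/-- A model: truth values for atoms, and an arbitrary truth-value
assignment to each formula `K φ`. -/
structure Model where
  atoms : ℕ → Prop
  kval : Formula → Prop

/-- Classical evaluation; `K φ` is read off from `kval`. -/
def Model.eval (M : Model) : Formula → Prop
  | .atom n => M.atoms n
  | .imp φ ψ => M.eval φ → M.eval ψ
  | .neg φ => ¬ M.eval φ
  | .K φ => M.kval φ

def Formula.or (φ ψ : Formula) : Formula := φ.neg.imp ψ
def Formula.and (φ ψ : Formula) : Formula := (φ.imp ψ.neg).neg

/-- φ is a tautology (valid): true in every model. -/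
def Valid (φ : Formula) : Prop := ∀ M : Model, M.eval φ

/-- Semantic consequence. -/
def Entails (S : Set Formula) (φ : Formula) : Prop :=
  ∀ M : Model, (∀ ψ ∈ S, M.eval ψ) → M.eval φ

/-!
Reading each `K φ` as a fresh propositional variable, the models form the compact space
`(ℕ → Bool) × (Formula → Bool)`, in which every formula cuts out a clopen set; hence `S₀ ⊨ φ`
is witnessed by a finite `T ⊆ S₀`. Induct on `T`: `insert ψ T ⊨ φ` gives `T ⊨ ψ → φ`, so
`K (ψ → φ)` holds by induction, `K ψ` holds as `ψ ∈ S₀`, and distribution yields `K φ`.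
In the base case `φ` is a tautology, so `K φ ∈ S₀`.
-/

namespace Model

def ofBool (v : (ℕ → Bool) × (Formula → Bool)) : Model :=
  ⟨fun n => v.1 n = true, fun φ => v.2 φ = true⟩

open Classical in
theorem ofBool_surjective : Function.Surjective ofBool := fun M =>
  ⟨(fun n => decide (M.atoms n), fun φ => decide (M.kval φ)), by simp [ofBool]⟩

theorem isClopen_setOf_eval_ofBool (φ : Formula) : IsClopen {v | (ofBool v).eval φ} := by
  induction φ with
  | atom n =>
    exact (isClopen_discrete {true}).preimage ((continuous_apply n).comp continuous_fst)
  | imp φ ψ ihφ ihψ => exact ihφ.himp ihψ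
  | neg φ ihφ => exact ihφ.compl
  | K φ =>
    exact (isClopen_discrete {true}).preimage ((continuous_apply φ).comp continuous_snd)

end Model

namespace Entails

theorem exists_finite_subset {S : Set Formula} {φ : Formula} (h : Entails S φ) :
    ∃ T ⊆ S, T.Finite ∧ Entails T φ := by
  have hcover :
      {v | ¬ (Model.ofBool v).eval φ} ⊆ ⋃ ψ ∈ S, {v | ¬ (Model.ofBool v).eval ψ} := by
    intro v hφ
    by_contra hS
    simp only [Set.mem_iUnion, Set.mem_ofPred_eq, not_exists, not_not] at hS
    exact hφ (h _ hS)
  obtain ⟨T, hTS, hT, hTcover⟩ :=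
    (Model.isClopen_setOf_eval_ofBool φ).compl.isClosed.isCompact.elim_finite_subcover_image
      (fun ψ _ => (Model.isClopen_setOf_eval_ofBool ψ).compl.isOpen) hcover
  refine ⟨T, hTS, hT, fun M hM => ?_⟩
  obtain ⟨v, rfl⟩ := Model.ofBool_surjective M
  by_contra hφ
  obtain ⟨ψ, hψ, hfalse⟩ := Set.mem_iUnion₂.mp (hTcover hφ)
  exact hfalse (hM ψ hψ)

theorem imp_of_insert {S : Set Formula} {ψ φ : Formula} (h : Entails (insert ψ S) φ) :
    Entails S (ψ.imp φ) := fun M hM hψ =>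
  h M (Set.forall_mem_insert.mpr ⟨hψ, hM⟩)

end Entails

theorem Model.kval_of_entails_of_finite (M : Model)
    (hmp : ∀ φ ψ, M.kval (φ.imp ψ) → M.kval φ → M.kval ψ)
    (hvalid : ∀ φ, Valid φ → M.kval φ) {T : Set Formula} (hT : T.Finite)
    (hK : ∀ ψ ∈ T, M.kval ψ) {φ : Formula} (h : Entails T φ) : M.kval φ := by
  induction T, hT using Set.Finite.induction_on generalizing φ with
  | empty => exact hvalid φ fun M => h M (by simp)
  | @insert ψ T _ _ ih =>
    obtain ⟨hψ, hT⟩ := Set.forall_mem_insert.mp hK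
    exact hmp ψ φ (ih hT h.imp_of_insert) hψ

/-- if S₀ is closed under K, contains all distribution instances,
and contains K(φ) for every tautology φ, then S₀ ⊨ φ implies S₀ ⊨ K(φ). -/
theorem entails_K_of_entails (S₀ : Set Formula)
    (hclosed : ∀ φ ∈ S₀, Formula.K φ ∈ S₀)
    (hdistr : ∀ φ ψ : Formula,
      ((Formula.K (φ.imp ψ)).imp ((Formula.K φ).imp (Formula.K ψ))) ∈ S₀)
    (htaut : ∀ φ : Formula, Valid φ → Formula.K φ ∈ S₀) :
    ∀ φ : Formula, Entails S₀ φ → Entails S₀ (Formula.K φ) := by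
  intro φ h M hM
  obtain ⟨T, hTS, hT, hTφ⟩ := h.exists_finite_subset
  exact M.kval_of_entails_of_finite (fun φ ψ => hM _ (hdistr φ ψ))
    (fun φ hφ => hM _ (htaut φ hφ)) hT (fun ψ hψ => hM _ (hclosed ψ (hTS hψ))) hTφ
end

section
/- For every n > 1, the following set of formulas is consistent (has a model): (1) all instances of K(φ→ψ)→K(φ)→K(ψ); (2) Tₙ = p₁∨…∨pₙ; (3) (⋀_{i=1}^n ¬K(pᵢ)) ∨ K(⊥); (4) ⋀_{i=1}^n ((¬Tᵢ)→K(¬Tᵢ)) where Tᵢ = p₁∨…∨pᵢ; (5) K(φ) for every tautology φ; (6) K(φ) for every φ that is an instance of (1)-(6); (7) all instances of K(φ)→φ. -/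
/-- ⊥, a fixed contradiction. -/
def fbot : Formula := (Formula.atom 1).and (Formula.atom 1).neg

/-- Tᵢ = p₁ ∨ … ∨ pᵢ (atom i plays the role of pᵢ, i ≥ 1). -/
def Tf : ℕ → Formula
  | 0 => Formula.atom 1
  | 1 => Formula.atom 1
  | (n+2) => (Tf (n+1)).or (Formula.atom (n+2))

/-- ⋀_{i=1}^n ¬K(pᵢ). -/
def bigNotK : ℕ → Formula
  | 0 => (Formula.K (Formula.atom 1)).neg
  | 1 => (Formula.K (Formula.atom 1)).neg
  | (n+2) => (bigNotK (n+1)).and (Formula.K (Formula.atom (n+2))).neg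

/-- ⋀_{i=1}^n ((¬Tᵢ) → K(¬Tᵢ)). -/
def bigObs : ℕ → Formula
  | 0 => ((Tf 1).neg).imp (Formula.K (Tf 1).neg)
  | 1 => ((Tf 1).neg).imp (Formula.K (Tf 1).neg)
  | (n+2) => (bigObs (n+1)).and (((Tf (n+2)).neg).imp (Formula.K (Tf (n+2)).neg))

/-- Lines (1)-(6) of the surprise-examination system: distribution, Tₙ,
the weakened surprise axiom, observability, K of tautologies, and K of any
instance of these (recursively). -/
inductive SurpriseAx (n : ℕ) : Formula → Prop
  | distr (φ ψ : Formula) :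
      SurpriseAx n ((Formula.K (φ.imp ψ)).imp ((Formula.K φ).imp (Formula.K ψ)))
  | tn : SurpriseAx n (Tf n)
  | surprise : SurpriseAx n ((bigNotK n).or (Formula.K fbot))
  | observ : SurpriseAx n (bigObs n)
  | ktaut (φ : Formula) : Valid φ → SurpriseAx n (Formula.K φ)
  | closure (φ : Formula) : SurpriseAx n φ → SurpriseAx n (Formula.K φ)


/-- Theorems: closure of tautologies and axioms under modus ponens. -/
inductive Thm (n : ℕ) : Formula → Prop
  | taut (φ : Formula) : Valid φ → Thm n φ
  | ax (φ : Formula) : SurpriseAx n φ → Thm n φ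
  | mp (φ ψ : Formula) : Thm n (φ.imp ψ) → Thm n φ → Thm n ψ

/-- Countermodel for atom i: all atoms except i true, K always true. -/
def Nm (i : ℕ) : Model := ⟨fun j => j ≠ i, fun _ => True⟩

lemma NmTf (i k : ℕ) (hk : k ≠ i) (h0 : k ≠ 0) : (Nm i).eval (Tf k) := by
  match k with
  | 1 =>
    simp only [Tf, Model.eval, Nm]
    omega
  | (m+2) =>
    simp only [Tf, Formula.or, Model.eval, Nm]
    intro _; omega

lemma NmTfn (i k : ℕ) (hk : 2 ≤ k) : (Nm i).eval (Tf k) := by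
  by_cases h : k = i
  · match k with
    | (m+2) =>
      simp only [Tf, Formula.or, Model.eval]
      intro hneg
      exact absurd (NmTf i (m+1) (by omega) (by omega)) hneg
  · exact NmTf i k h (by omega)

lemma NmBigObs (i k : ℕ) : (Nm i).eval (bigObs k) := by
  induction k with
  | zero => simp [bigObs, Model.eval, Nm]
  | succ m ih =>
    match m with
    | 0 => simp [bigObs, Model.eval, Nm]
    | (l+1) =>
      simp only [bigObs, Formula.and, Model.eval, Nm] at ih ⊢
      tauto

lemma NmSound (n i : ℕ) (hn : 2 ≤ n) (φ : Formula) (h : Thm n φ) :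
    (Nm i).eval φ := by
  induction h with
  | taut φ hv => exact hv _
  | mp φ ψ _ _ ih1 ih2 => exact ih1 ih2
  | ax φ hax =>
    induction hax with
    | distr φ ψ => simp [Model.eval, Nm]
    | tn => exact NmTfn i n hn
    | surprise => simp [Formula.or, Model.eval, Nm]
    | observ => exact NmBigObs i n
    | ktaut φ _ => simp [Model.eval, Nm]
    | closure φ _ _ => simp [Model.eval, Nm]

lemma notThmAtom (n i : ℕ) (hn : 2 ≤ n) : ¬ Thm n (Formula.atom i) := by
  intro h
  have := NmSound n i hn _ h
  simp [Model.eval, Nm] at this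

/-- The main model: all atoms true, K φ iff φ is a theorem. -/
def Mm (n : ℕ) : Model := ⟨fun _ => True, Thm n⟩

lemma MmTf (n k : ℕ) : (Mm n).eval (Tf k) := by
  match k with
  | 0 | 1 => simp [Tf, Model.eval, Mm]
  | (m+2) => simp [Tf, Formula.or, Model.eval, Mm]

lemma MmBigNotK (n k : ℕ) (hn : 2 ≤ n) : (Mm n).eval (bigNotK k) := by
  induction k with
  | zero => exact notThmAtom n 1 hn
  | succ m ih =>
    match m with
    | 0 => exact notThmAtom n 1 hn
    | (l+1) =>
      simp only [bigNotK, Formula.and, Model.eval] at ih ⊢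
      exact fun h => (h ih) (notThmAtom n (l+2) hn)

lemma MmBigObs (n k : ℕ) : (Mm n).eval (bigObs k) := by
  induction k with
  | zero => exact fun h => absurd (MmTf n 1) h
  | succ m ih =>
    match m with
    | 0 => exact fun h => absurd (MmTf n 1) h
    | (l+1) =>
      simp only [bigObs, Formula.and, Model.eval] at ih ⊢
      intro h
      exact (h ih) (fun hneg => absurd (MmTf n (l+2)) hneg)

lemma MmSound (n : ℕ) (hn : 2 ≤ n) (φ : Formula) (h : Thm n φ) :
    (Mm n).eval φ := by
  induction h with
  | taut φ hv => exact hv _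
  | mp φ ψ _ _ ih1 ih2 => exact ih1 ih2
  | ax φ hax =>
    induction hax with
    | distr φ ψ => exact fun h1 h2 => Thm.mp _ _ h1 h2
    | tn => exact MmTf n n
    | surprise =>
      intro hneg
      exact absurd (MmBigNotK n n hn) hneg
    | observ => exact MmBigObs n n
    | ktaut φ hv => exact Thm.taut _ hv
    | closure φ hax _ => exact Thm.ax _ hax

/-- for n > 1, lines (1)-(6) together with all instances of
soundness K(φ)→φ (line (7)) are simultaneously satisfiable. -/
theorem surprise_exam_consistent (n : ℕ) (hn : 1 < n) :
    ∃ M : Model, (∀ φ, SurpriseAx n φ → M.eval φ) ∧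
      (∀ φ : Formula, M.eval ((Formula.K φ).imp φ)) := by
  refine ⟨Mm n, fun φ h => MmSound n hn φ (Thm.ax φ h), fun φ => ?_⟩
  exact fun h => MmSound n hn φ h
end

section
/- Let n > 1 and let S₀ consist of: all instances of K(φ→ψ)→K(φ)→K(ψ); the formula Tₙ = p₁∨…∨pₙ; the formula (⋀_{i=1}^n ¬K(pᵢ)) ∨ K(⊥); the formula ⋀_{i=1}^n ((¬Tᵢ)→K(¬Tᵢ)); K(φ) for every tautology φ; and K(φ) for every instance of any of these schemas (closed recursively under prefixing K). Then for each 1 ≤ i ≤ n, S₀ does not semantically entail pᵢ. -/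
lemma aux_Tf (M : Model) : ∀ n j, 1 ≤ j → j ≤ n → M.atoms j → M.eval (Tf n)
  | 0, j, h1, h2, _ => by omega
  | 1, j, h1, h2, ha => by
      have : j = 1 := by omega
      subst this; exact ha
  | (n+2), j, h1, h2, ha => by
      show M.eval ((Tf (n+1)).or (Formula.atom (n+2)))
      intro hneg
      by_cases hc : j = n + 2
      · subst hc; exact ha
      · exact absurd (aux_Tf M (n+1) j h1 (by omega) ha) hneg

lemma aux_obs (M : Model) : ∀ n, (∀ φ, M.kval φ) → M.eval (bigObs n)
  | 0, hk => fun _ => hk _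
  | 1, hk => fun _ => hk _
  | (n+2), hk => by
      show M.eval ((bigObs (n+1)).and _)
      intro himp
      exact himp (aux_obs M (n+1) hk) (fun _ => hk _)

/-- for n > 1 and 1 ≤ i ≤ n, the set S₀ of lines (1)-(6)
does not semantically entail pᵢ. -/
theorem surprise_not_entails_pi (n : ℕ) (hn : 1 < n) (i : ℕ) (h1 : 1 ≤ i) (h2 : i ≤ n) :
    ¬ Entails {φ | SurpriseAx n φ} (Formula.atom i) := by
  set j := if i = 1 then 2 else 1 with hj
  have hj1 : 1 ≤ j := by unfold j; split <;> omega
  have hjn : j ≤ n := by unfold j; split <;> omega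
  have hji : j ≠ i := by unfold j; split <;> omega
  set M : Model := ⟨fun m => m = j, fun _ => True⟩ with hM
  intro h
  have hp : M.eval (Formula.atom i) := by
    apply h
    intro ψ hψ
    induction hψ with
    | distr φ ψ => intro _ _; trivial
    | tn => exact aux_Tf M n j hj1 hjn rfl
    | surprise => intro _; trivial
    | observ => exact aux_obs M n (fun _ => trivial)
    | ktaut φ _ => trivial
    | closure φ _ _ => trivial
  exact hji (hp.symm)
end

section
/- Let S_g and S_ℓ be sets of formulas in a propositional modal language with operator K, and let S be the proof system with global axioms S_g, local axioms S_ℓ, modus ponens, and the rule of global necessitation for K (one may infer K(φ) from φ provided the proof of φ used no local axioms). Let S' be the axiom set: (1) S_g; (2) K(φ) for every tautology φ; (3) all instances of K(φ→ψ)→K(φ)→K(ψ); (4) K(φ) for every instance of (1)-(4), recursively; (5) S_ℓ. Then every formula provable in S is a semantic consequence of S'. -/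
/-- Proofs using only global axioms, tautologies, modus ponens, and
necessitation. -/
inductive GProv (Sg : Set Formula) : Formula → Prop
  | ax {φ} : φ ∈ Sg → GProv Sg φ
  | taut {φ} : Valid φ → GProv Sg φ
  | mp {φ ψ} : GProv Sg (φ.imp ψ) → GProv Sg φ → GProv Sg ψ
  | nec {φ} : GProv Sg φ → GProv Sg (Formula.K φ)

/-- Provability in the system S with global axioms Sg, local axioms Sl,
modus ponens, and the rule of global necessitation: K(φ) may be inferred
only from a proof of φ that uses no local axioms. -/
inductive Prov (Sg Sl : Set Formula) : Formula → Prop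
  | locAx {φ} : φ ∈ Sl → Prov Sg Sl φ
  | ax {φ} : φ ∈ Sg → Prov Sg Sl φ
  | taut {φ} : Valid φ → Prov Sg Sl φ
  | mp {φ ψ} : Prov Sg Sl (φ.imp ψ) → Prov Sg Sl φ → Prov Sg Sl ψ
  | nec {φ} : GProv Sg φ → Prov Sg Sl (Formula.K φ)

/-- Lines (1)-(4) of S′: the global axioms, K of tautologies, K-distribution,
and K of any instance of these (recursively). -/
inductive SAx (Sg : Set Formula) : Formula → Prop
  | glob {φ} : φ ∈ Sg → SAx Sg φ
  | ktaut (φ : Formula) : Valid φ → SAx Sg (Formula.K φ)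
  | distr (φ ψ : Formula) :
      SAx Sg ((Formula.K (φ.imp ψ)).imp ((Formula.K φ).imp (Formula.K ψ)))
  | closure (φ : Formula) : SAx Sg φ → SAx Sg (Formula.K φ)

/-- Auxiliary: proofs from the SAx axioms using tautologies and MP only. -/
inductive SProv (Sg : Set Formula) : Formula → Prop
  | ax {φ} : SAx Sg φ → SProv Sg φ
  | taut {φ} : Valid φ → SProv Sg φ
  | mp {φ ψ} : SProv Sg (φ.imp ψ) → SProv Sg φ → SProv Sg ψ

lemma SProv.nec {Sg : Set Formula} {φ : Formula} (h : SProv Sg φ) :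
    SProv Sg (Formula.K φ) := by
  induction h with
  | ax h => exact SProv.ax (SAx.closure _ h)
  | taut h => exact SProv.ax (SAx.ktaut _ h)
  | mp h1 h2 ih1 ih2 => exact SProv.mp (SProv.mp (SProv.ax (SAx.distr _ _)) ih1) ih2

lemma SProv.sound {Sg : Set Formula} {φ : Formula} (h : SProv Sg φ)
    (S : Set Formula) (hS : {ψ | SAx Sg ψ} ⊆ S) : Entails S φ := by
  induction h with
  | ax h => exact fun M hM => hM _ (hS h)
  | taut h => exact fun M _ => h M
  | mp h1 h2 ih1 ih2 => exact fun M hM => ih1 M hM (ih2 M hM)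

lemma GProv.toSProv {Sg : Set Formula} {φ : Formula} (h : GProv Sg φ) :
    SProv Sg φ := by
  induction h with
  | ax h => exact SProv.ax (SAx.glob h)
  | taut h => exact SProv.taut h
  | mp _ _ ih1 ih2 => exact SProv.mp ih1 ih2
  | nec _ ih => exact ih.nec

/-- the standardizer lemma: every formula provable in S is a
semantic consequence of S′ = SAx ∪ Sl. -/
theorem standardizer (Sg Sl : Set Formula) (φ : Formula) (h : Prov Sg Sl φ) :
    Entails ({ψ | SAx Sg ψ} ∪ Sl) φ := by
  induction h with
  | locAx h => exact fun M hM => hM _ (Or.inr h)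
  | ax h => exact fun M hM => hM _ (Or.inl (SAx.glob h))
  | taut h => exact fun M _ => h M
  | mp _ _ ih1 ih2 => exact fun M hM => ih1 M hM (ih2 M hM)
  | nec h => exact h.toSProv.nec.sound _ Set.subset_union_left
end
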